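/- For the unweighted star graph S_m with m edges (m+1 vertices, center adjacent to all leaves) and any 1 ≤ k ≤ (m+1)/2, the largest eigenvalue of the adjacency matrix of the k-th token graph F_k(S_m) equals √(k(m+1-k)). -/

import Mathlib

/-!
The vector equal to `√(m + 1 - k)` on token sets containing the centre and to `√k` on the
others is a positive eigenvector of the adjacency matrix of `F_k(S_m)` for `√(k (m + 1 - k))`:
a set containing the centre has `m + 1 - k` neighbours, none of which contains the centre,
and a set avoiding the centre has `k` neighbours, all containing it. For a nonnegative matrix
a positive eigenvector belongs to the largest eigenvalue: comparing any eigenvector `x` with it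
at a coordinate maximising `|x i| / v i` bounds the modulus of every real eigenvalue.
-/

open Matrix Finset

noncomputable section

/-- Edge weight between vertices `A`, `B` of a token graph: nonzero exactly when the
symmetric difference of `A` and `B` is an edge `{a, b}` of `G` with `a ∈ A`, `b ∈ B`,
in which case it is `w a b`. -/
def tokenW {n : ℕ} (w : Fin n → Fin n → ℝ) (A B : Finset (Fin n)) : ℝ :=
  ∑ a ∈ A \ B, ∑ b ∈ B \ A, if A \ {a} = B \ {b} then w a b else 0

/-- Vertices of the `k`-th token graph on `[n]`: the `k`-element subsets. -/
abbrev TokenVert (n k : ℕ) := {s : Finset (Fin n) // s.card = k}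

/-- Weighted adjacency matrix of the `k`-th token graph `F_k(G)`. -/
def tokenA {n : ℕ} (w : Fin n → Fin n → ℝ) (k : ℕ) :
    Matrix (TokenVert n k) (TokenVert n k) ℝ :=
  Matrix.of fun A B => tokenW w A.1 B.1

/-- Weighted degree matrix of `F_k(G)`. -/
def tokenD {n : ℕ} (w : Fin n → Fin n → ℝ) (k : ℕ) :
    Matrix (TokenVert n k) (TokenVert n k) ℝ :=
  Matrix.diagonal fun A => ∑ B : TokenVert n k, tokenW w A.1 B.1

/-- Weighted Laplacian of `F_k(G)`. -/
def tokenL {n : ℕ} (w : Fin n → Fin n → ℝ) (k : ℕ) :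
    Matrix (TokenVert n k) (TokenVert n k) ℝ :=
  tokenD w k - tokenA w k

/-- Weighted signless Laplacian of `F_k(G)`. -/
def tokenQ {n : ℕ} (w : Fin n → Fin n → ℝ) (k : ℕ) :
    Matrix (TokenVert n k) (TokenVert n k) ℝ :=
  tokenD w k + tokenA w k

/-- Weight function of the unweighted star graph `S_m` on `Fin (m+1)`:
vertex `0` (the center) is adjacent to all other vertices. -/
def starW (m : ℕ) : Fin (m + 1) → Fin (m + 1) → ℝ :=
  fun i j => if i ≠ j ∧ (i = 0 ∨ j = 0) then 1 else 0

/-- The largest eigenvalue of a real matrix, as the supremum of its real spectrum. -/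
def maxEig {ι : Type*} [Fintype ι] [DecidableEq ι] (M : Matrix ι ι ℝ) : ℝ :=
  sSup (spectrum ℝ M)

theorem Matrix.mem_spectrum_iff_exists_mulVec_eq_smul {K n : Type*} [Field K] [Fintype n]
    [DecidableEq n] {M : Matrix n n K} {μ : K} :
    μ ∈ spectrum K M ↔ ∃ v ≠ 0, M *ᵥ v = μ • v := by
  rw [← Matrix.spectrum_toLin', ← Module.End.hasEigenvalue_iff_mem_spectrum]
  constructor
  · intro h
    obtain ⟨v, hv⟩ := h.exists_hasEigenvector
    exact ⟨v, hv.2, by simpa using hv.apply_eq_smul⟩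
  · rintro ⟨v, hv, hMv⟩
    exact Module.End.hasEigenvalue_of_hasEigenvector
      ⟨Module.End.mem_eigenspace_iff.mpr (by simpa using hMv), hv⟩

section PositiveEigenvector

variable {ι : Type*} [Fintype ι] [DecidableEq ι] {M : Matrix ι ι ℝ} {v : ι → ℝ} {r : ℝ}

theorem Matrix.abs_le_of_mem_spectrum_of_nonneg_of_pos_eigenvector (hM : ∀ i j, 0 ≤ M i j)
    (hv : ∀ i, 0 < v i) (hMv : M *ᵥ v = r • v) {μ : ℝ} (hμ : μ ∈ spectrum ℝ M) :
    |μ| ≤ r := by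
  obtain ⟨x, hx, hMx⟩ := Matrix.mem_spectrum_iff_exists_mulVec_eq_smul.mp hμ
  obtain ⟨j, hj⟩ := Function.ne_iff.mp hx
  obtain ⟨i, -, hi⟩ := Finset.exists_max_image univ (fun i => |x i| / v i) ⟨j, mem_univ j⟩
  set c := |x i| / v i
  have hxc : ∀ j, |x j| ≤ c * v j := fun j => (div_le_iff₀ (hv j)).mp (hi j (mem_univ j))
  have hxi : |x i| = c * v i := (div_mul_cancel₀ _ (hv i).ne').symm
  have hc : 0 < c := (div_pos (abs_pos.mpr hj) (hv j)).trans_le (hi j (mem_univ j))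
  have hxi_pos : 0 < |x i| := hxi ▸ mul_pos hc (hv i)
  refine le_of_mul_le_mul_right ?_ hxi_pos
  calc |μ| * |x i| = |∑ j, M i j * x j| := by
        rw [← abs_mul, ← smul_eq_mul, ← Pi.smul_apply, ← hMx]; rfl
    _ ≤ ∑ j, M i j * |x j| := by
        refine (abs_sum_le_sum_abs _ _).trans_eq (sum_congr rfl fun j _ => ?_)
        rw [abs_mul, abs_of_nonneg (hM i j)]
    _ ≤ ∑ j, M i j * (c * v j) := by gcongr with j; exacts [hM i j, hxc j]
    _ = c * (M *ᵥ v) i := by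
        simp only [mulVec, dotProduct, mul_sum]
        exact sum_congr rfl fun j _ => by ring
    _ = r * |x i| := by rw [hMv, hxi, Pi.smul_apply, smul_eq_mul]; ring

theorem maxEig_eq_of_nonneg_of_pos_eigenvector [Nonempty ι] (hM : ∀ i j, 0 ≤ M i j)
    (hv : ∀ i, 0 < v i) (hMv : M *ᵥ v = r • v) : maxEig M = r := by
  have hv0 : v ≠ 0 := fun h => (hv (Classical.arbitrary ι)).ne' (congrFun h _)
  have hr : r ∈ spectrum ℝ M := Matrix.mem_spectrum_iff_exists_mulVec_eq_smul.mpr ⟨v, hv0, hMv⟩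
  exact IsGreatest.csSup_eq ⟨hr, fun μ hμ => (le_abs_self μ).trans
    (Matrix.abs_le_of_mem_spectrum_of_nonneg_of_pos_eigenvector hM hv hMv hμ)⟩

end PositiveEigenvector

theorem Finset.eq_insert_erase_iff_of_mem_of_notMem {α : Type*} [DecidableEq α]
    {A B : Finset α} {a b : α} (ha : a ∈ A) (hb : b ∉ A) :
    B = insert b (A.erase a) ↔ a ∉ B ∧ b ∈ B ∧ A \ {a} = B \ {b} := by
  simp only [sdiff_singleton_eq_erase]
  constructor
  · rintro rfl
    have hab : a ≠ b := ne_of_mem_of_not_mem ha hb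
    refine ⟨by simp [hab], mem_insert_self b _, ?_⟩
    rw [erase_insert (fun h => hb (mem_of_mem_erase h))]
  · rintro ⟨-, hbB, hAB⟩
    rw [hAB, insert_erase hbB]

theorem Finset.card_insert_erase_of_mem_of_notMem {α : Type*} [DecidableEq α] {A : Finset α}
    {a b : α} (ha : a ∈ A) (hb : b ∉ A) : (insert b (A.erase a)).card = A.card := by
  rw [card_insert_of_notMem (fun h => hb (mem_of_mem_erase h)), card_erase_add_one ha]

section TokenGraph

variable {n : ℕ} (w : Fin n → Fin n → ℝ)

theorem tokenW_eq_sum_sum_ite (A B : Finset (Fin n)) :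
    tokenW w A B = ∑ a ∈ A, ∑ b ∈ Aᶜ, if B = insert b (A.erase a) then w a b else 0 := by
  have hBA : B \ A = Aᶜ.filter (· ∈ B) := by ext; simp [and_comm]
  rw [tokenW, sdiff_eq_filter, hBA, sum_filter]
  refine sum_congr rfl fun a ha => ?_
  rw [sum_filter]
  by_cases haB : a ∈ B
  · rw [if_neg (not_not.mpr haB)]
    refine (sum_eq_zero fun b hb => if_neg fun h => ?_).symm
    exact ((eq_insert_erase_iff_of_mem_of_notMem ha (mem_compl.mp hb)).mp h).1 haB
  · rw [if_pos haB]
    refine sum_congr rfl fun b hb => ?_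
    rw [← ite_and]
    exact if_congr ((and_iff_right haB).symm.trans
      (eq_insert_erase_iff_of_mem_of_notMem ha (mem_compl.mp hb)).symm) rfl rfl

theorem tokenA_mulVec_apply {k : ℕ} (g : Finset (Fin n) → ℝ) (A : TokenVert n k) :
    (tokenA w k *ᵥ fun B => g B.1) A
      = ∑ a ∈ A.1, ∑ b ∈ A.1ᶜ, w a b * g (insert b (A.1.erase a)) := by
  simp only [mulVec, dotProduct, tokenA, of_apply, tokenW_eq_sum_sum_ite, sum_mul]
  rw [sum_comm]
  refine sum_congr rfl fun a ha => ?_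
  rw [sum_comm]
  refine sum_congr rfl fun b hb => ?_
  have hcard := card_insert_erase_of_mem_of_notMem ha (mem_compl.mp hb)
  rw [sum_eq_single ⟨_, hcard.trans A.2⟩]
  · simp
  · intro B _ hB
    rw [if_neg (fun h => hB (Subtype.ext h)), zero_mul]
  · simp

theorem tokenW_nonneg (hw : ∀ a b, 0 ≤ w a b) (A B : Finset (Fin n)) : 0 ≤ tokenW w A B :=
  sum_nonneg fun a _ => sum_nonneg fun b _ => by split_ifs; exacts [hw a b, le_rfl]

end TokenGraph

section Star

variable {m : ℕ}

theorem starW_nonneg (a b : Fin (m + 1)) : 0 ≤ starW m a b := by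
  unfold starW; split_ifs <;> norm_num

theorem sum_sum_starW_mul (A : Finset (Fin (m + 1))) (f : Fin (m + 1) → Fin (m + 1) → ℝ) :
    ∑ a ∈ A, ∑ b ∈ Aᶜ, starW m a b * f a b
      = if 0 ∈ A then ∑ b ∈ Aᶜ, f 0 b else ∑ a ∈ A, f a 0 := by
  split_ifs with h0
  · rw [sum_eq_single_of_mem 0 h0]
    · refine sum_congr rfl fun b hb => ?_
      have hb0 : 0 ≠ b := ne_of_mem_of_not_mem h0 (mem_compl.mp hb)
      simp [starW, hb0]
    · intro a ha ha0
      refine sum_eq_zero fun b hb => ?_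
      have hb0 : b ≠ 0 := (ne_of_mem_of_not_mem h0 (mem_compl.mp hb)).symm
      simp [starW, ha0, hb0]
  · refine sum_congr rfl fun a ha => ?_
    have ha0 : a ≠ 0 := ne_of_mem_of_not_mem ha h0
    rw [sum_eq_single_of_mem 0 (mem_compl.mpr h0)]
    · simp [starW, ha0]
    · intro b _ hb0
      simp [starW, ha0, hb0]

def starPerronVec (m k : ℕ) (s : Finset (Fin (m + 1))) : ℝ :=
  if 0 ∈ s then √((m : ℝ) + 1 - k) else √(k : ℝ)

theorem tokenA_starW_mulVec_starPerronVec (k : ℕ) :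
    tokenA (starW m) k *ᵥ (fun B => starPerronVec m k B.1)
      = √((k : ℝ) * ((m : ℝ) + 1 - k)) • fun B => starPerronVec m k B.1 := by
  ext A
  have hcard : (A.1.card : ℝ) + A.1ᶜ.card = m + 1 := by
    exact_mod_cast (card_add_card_compl A.1).trans (Fintype.card_fin _)
  have hk : (0 : ℝ) ≤ k := k.cast_nonneg
  have hmk : (0 : ℝ) ≤ m + 1 - k := by rw [← hcard, A.2]; simp
  rw [tokenA_mulVec_apply, sum_sum_starW_mul, Pi.smul_apply, smul_eq_mul, Real.sqrt_mul hk]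
  split_ifs with h0
  · have hB : ∀ b ∈ A.1ᶜ, starPerronVec m k (insert b (A.1.erase 0)) = √(k : ℝ) := by
      intro b hb
      have hb0 : 0 ≠ b := ne_of_mem_of_not_mem h0 (mem_compl.mp hb)
      simp [starPerronVec, hb0]
    rw [sum_congr rfl hB, sum_const, nsmul_eq_mul, starPerronVec, if_pos h0,
      mul_assoc, Real.mul_self_sqrt hmk, ← hcard, A.2]
    ring
  · have hB : ∀ a ∈ A.1, starPerronVec m k (insert 0 (A.1.erase a)) = √((m : ℝ) + 1 - k) := by
      intro a _
      simp [starPerronVec]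
    rw [sum_congr rfl hB, sum_const, nsmul_eq_mul, starPerronVec, if_neg h0, A.2,
      mul_right_comm, Real.mul_self_sqrt hk]

end Star

theorem star_tokenA_maxEig_general (m k : ℕ) (hk : 1 ≤ k) (hkm : 2 * k ≤ m + 1) :
    maxEig (tokenA (starW m) k) = Real.sqrt ((k : ℝ) * ((m : ℝ) + 1 - (k : ℝ))) := by
  have hk_pos : (0 : ℝ) < k := by exact_mod_cast hk
  have hmk_pos : (0 : ℝ) < m + 1 - k := by
    have : (2 * k : ℝ) ≤ m + 1 := by exact_mod_cast hkm
    linarith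
  obtain ⟨s, -, hs⟩ := exists_subset_card_eq (s := (univ : Finset (Fin (m + 1)))) (n := k)
    (by rw [card_univ, Fintype.card_fin]; omega)
  have : Nonempty (TokenVert (m + 1) k) := ⟨⟨s, hs⟩⟩
  refine maxEig_eq_of_nonneg_of_pos_eigenvector
    (fun A B => tokenW_nonneg _ starW_nonneg A.1 B.1) (fun A => ?_)
    (tokenA_starW_mulVec_starPerronVec k)
  unfold starPerronVec
  split_ifs
  exacts [Real.sqrt_pos.mpr hmk_pos, Real.sqrt_pos.mpr hk_pos]

/-- For the star `S_m` and `1 ≤ k ≤ (m+1)/2`, the largest adjacency eigenvalue of the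
token graph `F_k(S_m)` equals `√(k (m + 1 - k))`. -/
theorem star_tokenA_maxEig (m k : ℕ) (hm : 1 ≤ m) (hk : 1 ≤ k) (hkm : 2 * k ≤ m + 1) :
    maxEig (tokenA (starW m) k) = Real.sqrt ((k : ℝ) * ((m : ℝ) + 1 - (k : ℝ))) :=
  star_tokenA_maxEig_general m k hk hkm
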